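/- arXiv:2605.28961 — 4 statements merged into one kernel-verified Lean document; each statement's English description precedes it below -/
import Mathlib

section
/- Let K ~ Geom(P) on {1,2,...} with P ∈ (0,1], β ∈ (0,1), Q = 1-P. Then E[(β(1-β^K)/(1-β))²] = β²(1+Qβ)/((1-Qβ)(1-Qβ²)). -/
/-- For `K ~ Geom(P)` on `{1,2,...}` with `P ∈ (0,1]`, `β ∈ (0,1)`, `Q = 1 - P`:
`E[(β(1-β^K)/(1-β))²] = β²(1+Qβ) / ((1-Qβ)(1-Qβ²))`.
Index `k : ℕ` corresponds to `K = k + 1`. -/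
theorem geom_expectation_SK_sq (P β : ℝ) (hP0 : 0 < P) (hP1 : P ≤ 1)
    (hβ0 : 0 < β) (hβ1 : β < 1) :
    ∑' k : ℕ, (P * (1 - P) ^ k) * (β * (1 - β ^ (k + 1)) / (1 - β)) ^ 2
      = β ^ 2 * (1 + (1 - P) * β) / ((1 - (1 - P) * β) * (1 - (1 - P) * β ^ 2)) := by
  set Q := 1 - P with hQ
  have hQ0 : 0 ≤ Q := by simp [hQ]; linarith
  have hQ1 : Q < 1 := by simp [hQ]; linarith
  have hβ0' : (0:ℝ) ≤ β := hβ0.le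
  have hr2 : Q * β < 1 := by nlinarith
  have hr3 : Q * β ^ 2 < 1 := by nlinarith
  have hr2' : 0 ≤ Q * β := by positivity
  have hr3' : 0 ≤ Q * β ^ 2 := by positivity
  have s1 : Summable (fun k : ℕ => Q ^ k) := summable_geometric_of_lt_one hQ0 hQ1
  have s2 : Summable (fun k : ℕ => (Q * β) ^ k) := summable_geometric_of_lt_one hr2' hr2
  have s3 : Summable (fun k : ℕ => (Q * β ^ 2) ^ k) := summable_geometric_of_lt_one hr3' hr3
  have hne : (1 - β) ≠ 0 := by linarith
  have key : ∀ k : ℕ, (P * Q ^ k) * (β * (1 - β ^ (k + 1)) / (1 - β)) ^ 2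
      = (P * β ^ 2 / (1 - β) ^ 2) * Q ^ k + (-2 * P * β ^ 3 / (1 - β) ^ 2) * (Q * β) ^ k
        + (P * β ^ 4 / (1 - β) ^ 2) * (Q * β ^ 2) ^ k := by
    intro k
    rw [mul_pow, mul_pow]
    field_simp
    ring
  rw [tsum_congr key]
  rw [Summable.tsum_add ((s1.mul_left _).add (s2.mul_left _)) (s3.mul_left _),
      Summable.tsum_add (s1.mul_left _) (s2.mul_left _),
      tsum_mul_left, tsum_mul_left, tsum_mul_left,
      tsum_geometric_of_lt_one hQ0 hQ1, tsum_geometric_of_lt_one hr2' hr2,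
      tsum_geometric_of_lt_one hr3' hr3]
  have h2 : 1 - Q * β ≠ 0 := by linarith
  have h3 : 1 - Q * β ^ 2 ≠ 0 := by linarith
  rw [hQ]
  have h1 : 1 - (1 - P) ≠ 0 := by linarith
  have h2' : 1 - β * (1 - P) ≠ 0 := by rw [mul_comm]; exact h2
  have h3' : 1 - β ^ 2 * (1 - P) ≠ 0 := by rw [mul_comm]; exact h3
  field_simp
  ring
end

section
/- Let K ~ Geom(P) on {1,2,...} with P ∈ (0,1], β ∈ (0,1), Q = 1-P. Then E[S_K · S_{K-1}] = Qβ²(1+β)/((1-Qβ)(1-Qβ²)), where S_K = Σ_{j=1}^K β^j and S_{K-1} = Σ_{j=1}^{K-1} β^j. -/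
/-- For `K ~ Geom(P)` on `{1,2,...}` with `P ∈ (0,1]`, `β ∈ (0,1)`, `Q = 1 - P`:
`E[S_K · S_{K-1}] = Qβ²(1+β) / ((1-Qβ)(1-Qβ²))`, where
`S_K = β(1-β^K)/(1-β)` and `S_{K-1} = β(1-β^(K-1))/(1-β)`.
Index `k : ℕ` corresponds to `K = k + 1`. -/
theorem geom_expectation_SK_SKm1 (P β : ℝ) (hP0 : 0 < P) (hP1 : P ≤ 1)
    (hβ0 : 0 < β) (hβ1 : β < 1) :
    ∑' k : ℕ, (P * (1 - P) ^ k) *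
        ((β * (1 - β ^ (k + 1)) / (1 - β)) * (β * (1 - β ^ k) / (1 - β)))
      = (1 - P) * β ^ 2 * (1 + β) / ((1 - (1 - P) * β) * (1 - (1 - P) * β ^ 2)) := by
  set Q : ℝ := 1 - P with hQ
  have hQ0 : 0 ≤ Q := by simp [hQ]; linarith
  have hQ1 : Q < 1 := by simp [hQ]; linarith
  have hβ0' : (0:ℝ) ≤ β := le_of_lt hβ0
  have h1 : Q * β < 1 := by nlinarith
  have h2 : Q * β ^ 2 < 1 := by nlinarith
  have s1 : Summable fun k : ℕ => Q ^ k := summable_geometric_of_lt_one hQ0 hQ1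
  have s2 : Summable fun k : ℕ => (Q * β) ^ k :=
    summable_geometric_of_lt_one (by positivity) h1
  have s3 : Summable fun k : ℕ => (Q * β ^ 2) ^ k :=
    summable_geometric_of_lt_one (by positivity) h2
  set A : ℝ := P * β ^ 2 / (1 - β) ^ 2 with hA
  set B : ℝ := -(P * β ^ 2 * (1 + β)) / (1 - β) ^ 2 with hB
  set C : ℝ := P * β ^ 3 / (1 - β) ^ 2 with hC
  have hβne : (1 - β) ≠ 0 := by intro h; linarith [h]
  have hrw : ∀ k : ℕ,
      (P * Q ^ k) * ((β * (1 - β ^ (k + 1)) / (1 - β)) * (β * (1 - β ^ k) / (1 - β)))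
        = A * Q ^ k + (B * (Q * β) ^ k + C * (Q * β ^ 2) ^ k) := by
    intro k
    rw [hA, hB, hC]
    simp only [mul_pow]
    field_simp
    ring
  calc (∑' k : ℕ, (P * Q ^ k) *
        ((β * (1 - β ^ (k + 1)) / (1 - β)) * (β * (1 - β ^ k) / (1 - β))))
      = ∑' k : ℕ, (A * Q ^ k + (B * (Q * β) ^ k + C * (Q * β ^ 2) ^ k)) :=
        tsum_congr hrw
    _ = A * ∑' k : ℕ, Q ^ k + (B * ∑' k : ℕ, (Q * β) ^ k + C * ∑' k : ℕ, (Q * β ^ 2) ^ k) := by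
        rw [Summable.tsum_add (s1.mul_left A) ((s2.mul_left B).add (s3.mul_left C)),
          Summable.tsum_add (s2.mul_left B) (s3.mul_left C), tsum_mul_left, tsum_mul_left,
          tsum_mul_left]
    _ = A * (1 - Q)⁻¹ + (B * (1 - Q * β)⁻¹ + C * (1 - Q * β ^ 2)⁻¹) := by
        rw [tsum_geometric_of_lt_one hQ0 hQ1, tsum_geometric_of_lt_one (by positivity) h1,
          tsum_geometric_of_lt_one (by positivity) h2]
    _ = Q * β ^ 2 * (1 + β) / ((1 - Q * β) * (1 - Q * β ^ 2)) := by
        have hP : 1 - Q = P := by simp [hQ]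
        have hne1 : (1 - Q * β) ≠ 0 := by intro h; linarith [h]
        have hne2 : (1 - Q * β ^ 2) ≠ 0 := by intro h; linarith [h]
        rw [hA, hB, hC, hP, hQ]
        have e1 : 1 - β * (1 - P) ≠ 0 := by rw [mul_comm]; exact hne1
        have e2 : 1 - β ^ 2 * (1 - P) ≠ 0 := by rw [mul_comm]; exact hne2
        field_simp
        ring
end

section
/- (Routh–Hurwitz for cubics) A monic cubic polynomial z³ + c₁z² + c₂z + c₃ with real coefficients has all roots with strictly negative real part if and only if c₁ > 0, c₃ > 0, and c₁c₂ > c₃. -/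
/-!
Necessity: a real cubic has a real root `r`, so it factors as `(z - r) (z² + b z + c)`;
stability forces `r < 0` and, for the quadratic factor, `b > 0` (its roots sum to `-b`) and
`c > 0`. Rewriting `c₁ = b - r`, `c₂ = c - r b`, `c₃ = -r c` gives
`c₁ c₂ - c₃ = b c - r b² + r² b > 0`.

Sufficiency: a root `x + i y` with `x ≥ 0` is impossible. If `y = 0` every term of the cubic
is nonnegative and `c₃ > 0`. If `y ≠ 0`, the imaginary part gives `y² = 3x² + 2c₁x + c₂`, and
substituting into the real part yields `c₁ c₂ - c₃ = -8x³ - 8c₁x² - 2(c₂ + c₁²)x ≤ 0`.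
-/

open Polynomial Filter

theorem tendsto_cubic_atTop (a b c : ℝ) :
    Tendsto (fun x : ℝ => x ^ 3 + a * x ^ 2 + b * x + c) atTop atTop := by
  have hmonic : (X ^ 3 + C a * X ^ 2 + C b * X + C c : ℝ[X]).Monic := by monicity!
  have hdeg : (X ^ 3 + C a * X ^ 2 + C b * X + C c : ℝ[X]).natDegree = 3 := by
    compute_degree!
  have hpoly := tendsto_atTop_of_leadingCoeff_nonneg _
    (by rw [degree_eq_natDegree hmonic.ne_zero, hdeg]; norm_num)
    (by rw [hmonic.leadingCoeff]; norm_num)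
  simpa using hpoly

theorem exists_cubic_eq_zero (a b c : ℝ) : ∃ r : ℝ, r ^ 3 + a * r ^ 2 + b * r + c = 0 := by
  have hbot : Tendsto (fun x : ℝ => x ^ 3 + a * x ^ 2 + b * x + c) atBot atBot := by
    refine ((tendsto_neg_atTop_atBot.comp (tendsto_cubic_atTop (-a) b (-c))).comp
      tendsto_neg_atBot_atTop).congr fun x => ?_
    simp only [Function.comp]
    ring
  exact (Continuous.surjective (by fun_prop) (tendsto_cubic_atTop a b c) hbot) 0

theorem pos_of_forall_quadratic_root_re_neg (b c : ℝ)
    (h : ∀ z : ℂ, z ^ 2 + b * z + c = 0 → z.re < 0) : 0 < b ∧ 0 < c := by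
  constructor
  · obtain ⟨w, hw⟩ := IsAlgClosed.exists_eq_mul_self ((b : ℂ) ^ 2 - 4 * c)
    have hplus := h ((-b + w) / 2) (by linear_combination -hw / 4)
    have hminus := h ((-b - w) / 2) (by linear_combination -hw / 4)
    simp only [Complex.div_ofNat_re, Complex.add_re, Complex.sub_re, Complex.neg_re,
      Complex.ofReal_re] at hplus hminus
    linarith
  · by_contra! hc
    have hd : 0 ≤ b ^ 2 - 4 * c := by nlinarith
    have hroot :
        ((-b + √(b ^ 2 - 4 * c)) / 2) ^ 2 + b * ((-b + √(b ^ 2 - 4 * c)) / 2) + c = 0 := by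
      linear_combination Real.sq_sqrt hd / 4
    have hneg := h ((-b + √(b ^ 2 - 4 * c)) / 2 : ℝ) (by exact_mod_cast hroot)
    rw [Complex.ofReal_re] at hneg
    have : b ≤ √(b ^ 2 - 4 * c) := (le_abs_self b).trans (Real.abs_le_sqrt (by linarith))
    linarith

theorem routh_hurwitz_conditions_of_forall_cubic_root_re_neg (c₁ c₂ c₃ : ℝ)
    (h : ∀ z : ℂ, z ^ 3 + (c₁ : ℂ) * z ^ 2 + (c₂ : ℂ) * z + (c₃ : ℂ) = 0 → z.re < 0) :
    0 < c₁ ∧ 0 < c₃ ∧ c₃ < c₁ * c₂ := by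
  obtain ⟨r, hr⟩ := exists_cubic_eq_zero c₁ c₂ c₃
  have hrC : (r : ℂ) ^ 3 + c₁ * r ^ 2 + c₂ * r + c₃ = 0 := by exact_mod_cast hr
  have hfactor : ∀ z : ℂ, z ^ 3 + (c₁ : ℂ) * z ^ 2 + (c₂ : ℂ) * z + (c₃ : ℂ) =
      (z - r) * (z ^ 2 + ((c₁ + r : ℝ) : ℂ) * z + ((c₂ + r * (c₁ + r) : ℝ) : ℂ)) := by
    intro z
    push_cast
    linear_combination hrC
  have hr_neg : r < 0 := by simpa using h r hrC
  obtain ⟨hb, hc⟩ := pos_of_forall_quadratic_root_re_neg (c₁ + r) (c₂ + r * (c₁ + r))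
    fun z hz => h z (by rw [hfactor, hz, mul_zero])
  have hc₃ : c₃ = -r * (c₂ + r * (c₁ + r)) := by linear_combination hr
  refine ⟨by linarith, by rw [hc₃]; exact mul_pos (neg_pos.mpr hr_neg) hc, ?_⟩
  have hrb : 0 < -r * (c₁ + r) := mul_pos (neg_pos.mpr hr_neg) hb
  nlinarith [mul_pos hb hc, mul_pos hrb hb, mul_pos hrb (neg_pos.mpr hr_neg)]

theorem cubic_re_im_eq_zero {c₁ c₂ c₃ : ℝ} {z : ℂ}
    (hz : z ^ 3 + (c₁ : ℂ) * z ^ 2 + (c₂ : ℂ) * z + (c₃ : ℂ) = 0) :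
    z.re ^ 3 - 3 * z.re * z.im ^ 2 + c₁ * (z.re ^ 2 - z.im ^ 2) + c₂ * z.re + c₃ = 0 ∧
      z.im * (3 * z.re ^ 2 - z.im ^ 2 + 2 * c₁ * z.re + c₂) = 0 := by
  have hre := congrArg Complex.re hz
  have him := congrArg Complex.im hz
  simp only [pow_succ, pow_zero, one_mul, Complex.add_re, Complex.mul_re, Complex.mul_im,
    Complex.ofReal_re, Complex.ofReal_im, zero_mul, sub_zero, Complex.zero_re, Complex.add_im,
    add_zero, Complex.zero_im] at hre him
  exact ⟨by linear_combination hre, by linear_combination him⟩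

theorem re_neg_of_cubic_eq_zero {c₁ c₂ c₃ : ℝ} (h₁ : 0 < c₁) (h₃ : 0 < c₃)
    (h₁₃ : c₃ < c₁ * c₂) {z : ℂ}
    (hz : z ^ 3 + (c₁ : ℂ) * z ^ 2 + (c₂ : ℂ) * z + (c₃ : ℂ) = 0) : z.re < 0 := by
  obtain ⟨hre, him⟩ := cubic_re_im_eq_zero hz
  set x := z.re
  set y := z.im
  have h₂ : 0 < c₂ := pos_of_mul_pos_right (h₃.trans h₁₃) h₁.le
  by_contra! hx
  rcases eq_or_ne y 0 with hy | hy
  · rw [hy] at hre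
    nlinarith [pow_nonneg hx 3, mul_nonneg h₁.le (sq_nonneg x), mul_nonneg h₂.le hx]
  · have hy2 : y ^ 2 = 3 * x ^ 2 + 2 * c₁ * x + c₂ := by
      linear_combination -((mul_eq_zero.mp him).resolve_left hy)
    have key : c₁ * c₂ - c₃ = -8 * x ^ 3 - 8 * c₁ * x ^ 2 - 2 * (c₂ + c₁ ^ 2) * x := by
      linear_combination -hre - (3 * x + c₁) * hy2
    nlinarith [pow_nonneg hx 3, mul_nonneg h₁.le (sq_nonneg x), mul_nonneg h₂.le hx,
      mul_nonneg (sq_nonneg c₁) hx]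

/-- (Routh–Hurwitz for cubics) A monic cubic `z³ + c₁z² + c₂z + c₃` with real
coefficients has all (complex) roots with strictly negative real part if and only if
`c₁ > 0`, `c₃ > 0`, and `c₁c₂ > c₃`. -/
theorem routh_hurwitz_cubic (c₁ c₂ c₃ : ℝ) :
    (∀ z : ℂ, z ^ 3 + (c₁ : ℂ) * z ^ 2 + (c₂ : ℂ) * z + (c₃ : ℂ) = 0 → z.re < 0)
      ↔ (0 < c₁ ∧ 0 < c₃ ∧ c₃ < c₁ * c₂) :=
  ⟨routh_hurwitz_conditions_of_forall_cubic_root_re_neg c₁ c₂ c₃,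
    fun ⟨h₁, h₃, h₁₃⟩ _ hz => re_neg_of_cubic_eq_zero h₁ h₃ h₁₃ hz⟩
end

section
/- (Cubic root dichotomy, slow-root case) Let p(z) = z³ + c₁z² + c₂z + c₃ be a monic real cubic with roots λ₁, λ₂, λ₃ ∈ C, and suppose there exist constants 0 < a ≤ A and a scale ρ > 0 with aρ ≤ c₁ ≤ Aρ, aρ² ≤ c₂ ≤ Aρ², and 0 ≤ c₃ ≤ δρ³ for δ sufficiently small depending on a, A. Then exactly one root λ_slow is real with |λ_slow| ≤ C·c₃/c₂ for a constant C depending only on a, A, and the other two roots satisfy |λ| ≥ c·ρ for a constant c > 0 depending only on a, A. -/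
set_option maxHeartbeats 1000000

private lemma cubic_bound_helper (A ρ r c₃ : ℝ) (hA : 0 < A) (hρ : 0 < ρ) (hrpos : 0 < r)
    (hcon : (A + 2) * ρ < r) (habs : r ^ 3 ≤ A * ρ * r ^ 2 + A * ρ ^ 2 * r + c₃)
    (hc3 : c₃ ≤ ρ ^ 3) : False := by
  have i5 : ρ < r := by nlinarith [mul_pos hA hρ]
  nlinarith [mul_lt_mul_of_pos_right hcon (mul_pos hrpos hrpos),
    mul_lt_mul_of_pos_left (mul_lt_mul_of_pos_right hcon hrpos) hρ,
    mul_lt_mul_of_pos_left (mul_self_lt_mul_self hρ.le i5) hρ,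
    mul_pos hρ (mul_pos hρ hrpos)]

lemma cubic_aux (a A ρ c₁ c₂ c₃ : ℝ) (ha : 0 < a) (haA : a ≤ A)
    (hρ : 0 < ρ) (hc1l : a * ρ ≤ c₁) (hc1u : c₁ ≤ A * ρ)
    (hc2l : a * ρ ^ 2 ≤ c₂) (hc2u : c₂ ≤ A * ρ ^ 2)
    (hc3l : 0 ≤ c₃) (hc3u : c₃ ≤ (a / (4 * (A + 2))) ^ 3 / 2 * ρ ^ 3)
    (x y z : ℂ)
    (h1 : x + y + z = -(c₁ : ℂ))
    (h2 : x * y + x * z + y * z = (c₂ : ℂ))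
    (h3 : x * y * z = -(c₃ : ℂ))
    (hxy : ‖x‖ ≤ ‖y‖) (hxz : ‖x‖ ≤ ‖z‖) :
    x.im = 0 ∧ ‖x‖ ≤ (2 * A / a) * (c₃ / c₂) ∧
      a / (4 * (A + 2)) * ρ ≤ ‖y‖ ∧ a / (4 * (A + 2)) * ρ ≤ ‖z‖ := by
  set ε : ℝ := a / (4 * (A + 2)) with hεdef
  have hKpos : (0:ℝ) < A + 2 := by linarith
  have hεpos : 0 < ε := by positivity
  have hεK : ε * (A + 2) = a / 4 := by rw [hεdef]; field_simp
  have hεlt : ε < 1 := by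
    rw [hεdef, div_lt_one (by positivity)]; nlinarith
  have hεa : ε ≤ a / 8 := by
    rw [hεdef, div_le_div_iff₀ (by positivity) (by norm_num)]; nlinarith
  have hc1pos : 0 < c₁ := by nlinarith [mul_pos ha hρ]
  have hc2pos : 0 < c₂ := by nlinarith [mul_pos ha (pow_pos hρ 2)]
  -- the polynomial identity
  have hpoly : ∀ w : ℂ, w ^ 3 + (c₁ : ℂ) * w ^ 2 + (c₂ : ℂ) * w + (c₃ : ℂ)
      = (w - x) * (w - y) * (w - z) := by
    intro w
    linear_combination w ^ 2 * h1 - w * h2 + h3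
  have hx0 : x ^ 3 + (c₁ : ℂ) * x ^ 2 + (c₂ : ℂ) * x + (c₃ : ℂ) = 0 := by
    rw [hpoly x]; ring
  have hy0 : y ^ 3 + (c₁ : ℂ) * y ^ 2 + (c₂ : ℂ) * y + (c₃ : ℂ) = 0 := by
    rw [hpoly y]; ring
  have hz0 : z ^ 3 + (c₁ : ℂ) * z ^ 2 + (c₂ : ℂ) * z + (c₃ : ℂ) = 0 := by
    rw [hpoly z]; ring
  have hc3u' : c₃ ≤ ρ ^ 3 := by
    nlinarith [pow_pos hρ 3, pow_pos hεpos 3,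
      pow_lt_one₀ (le_of_lt hεpos) hεlt (by norm_num : (3:ℕ) ≠ 0)]
  -- Cauchy-type bound on all roots
  have hbound : ∀ w : ℂ, w ^ 3 + (c₁ : ℂ) * w ^ 2 + (c₂ : ℂ) * w + (c₃ : ℂ) = 0 →
      ‖w‖ ≤ (A + 2) * ρ := by
    intro w hw
    by_contra hcon
    push_neg at hcon
    set r := ‖w‖ with hr
    have hrpos : 0 < r := lt_trans (by positivity) hcon
    have hw3 : (w ^ 3 : ℂ) = -((c₁ : ℂ) * w ^ 2 + (c₂ : ℂ) * w + (c₃ : ℂ)) := by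
      linear_combination hw
    have habs : r ^ 3 ≤ A * ρ * r ^ 2 + A * ρ ^ 2 * r + c₃ := by
      have e1 : ‖(c₁ : ℂ) * w ^ 2‖ ≤ A * ρ * r ^ 2 := by
        rw [norm_mul, norm_pow, Complex.norm_real, Real.norm_eq_abs, abs_of_pos hc1pos]
        nlinarith [sq_nonneg r]
      have e2 : ‖(c₂ : ℂ) * w‖ ≤ A * ρ ^ 2 * r := by
        rw [norm_mul, Complex.norm_real, Real.norm_eq_abs, abs_of_pos hc2pos]
        nlinarith
      have e3 : ‖(c₃ : ℂ)‖ ≤ c₃ := by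
        rw [Complex.norm_real, Real.norm_eq_abs, abs_of_nonneg hc3l]
      have t1 := norm_add_le ((c₁:ℂ) * w ^ 2 + (c₂:ℂ) * w) ((c₃:ℂ))
      have t2 := norm_add_le ((c₁:ℂ) * w ^ 2) ((c₂:ℂ) * w)
      calc r ^ 3 = ‖w ^ 3‖ := by rw [norm_pow]
        _ = ‖(c₁ : ℂ) * w ^ 2 + (c₂ : ℂ) * w + (c₃ : ℂ)‖ := by
            rw [hw3, norm_neg]
        _ ≤ A * ρ * r ^ 2 + A * ρ ^ 2 * r + c₃ := by linarith
    exact cubic_bound_helper A ρ r c₃ (lt_of_lt_of_le ha haA) hρ hrpos hcon habs hc3u'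
  have hby : ‖y‖ ≤ (A + 2) * ρ := hbound y hy0
  have hbz : ‖z‖ ≤ (A + 2) * ρ := hbound z hz0
  -- x is small: |x|^3 ≤ c₃ < (ερ)^3
  have hxsmall : ‖x‖ < ε * ρ := by
    have hprod : ‖x‖ * ‖y‖ * ‖z‖ = c₃ := by
      rw [← norm_mul, ← norm_mul, h3, norm_neg, Complex.norm_real, Real.norm_eq_abs,
        abs_of_nonneg hc3l]
    by_contra hcon
    push_neg at hcon
    have h1' : (ε * ρ) ^ 3 ≤ ‖x‖ * ‖y‖ * ‖z‖ := by
      have := mul_le_mul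
        (mul_le_mul hcon (hcon.trans hxy) (by positivity) (norm_nonneg x))
        (hcon.trans hxz) (by positivity) (by positivity)
      calc (ε * ρ) ^ 3 = ε * ρ * (ε * ρ) * (ε * ρ) := by ring
        _ ≤ _ := this
    rw [hprod] at h1'
    nlinarith [pow_pos (mul_pos hεpos hρ) 3]
  -- the other two roots are large
  have hAε : A * ε ≤ a / 4 := by
    have hexp : ε * (A + 2) = A * ε + 2 * ε := by ring
    linarith
  have hεsq : ε * ε ≤ a / 8 := by
    have h := mul_le_mul_of_nonneg_left hεlt.le hεpos.le
    rw [mul_one] at h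
    linarith
  have hb1 : ε * ρ * ((A + 2) * ρ) = a / 4 * ρ ^ 2 := by
    rw [hεdef]; field_simp
  have hyzbig : ∀ u v : ℂ, x * u = (c₂ : ℂ) + (c₁ : ℂ) * v + v ^ 2 →
      ‖u‖ ≤ (A + 2) * ρ → ε * ρ ≤ ‖v‖ := by
    intro u v hid hub
    by_contra hcon
    push_neg at hcon
    have hc2' : (c₂ : ℂ) = x * u - (c₁ : ℂ) * v - v ^ 2 := by linear_combination -hid
    have hle : c₂ ≤ ‖x * u‖ + ‖(c₁ : ℂ) * v‖
        + ‖v ^ 2‖ := by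
      have h0 : c₂ = ‖(c₂ : ℂ)‖ := by
        rw [Complex.norm_real, Real.norm_eq_abs, abs_of_pos hc2pos]
      rw [h0, hc2']
      calc ‖x * u - (c₁:ℂ) * v - v ^ 2‖
          ≤ ‖x * u - (c₁:ℂ) * v‖ + ‖v ^ 2‖ :=
            norm_sub_le _ _
        _ ≤ _ := by linarith [norm_sub_le (x * u) ((c₁:ℂ) * v)]
    have e1 : ‖x * u‖ ≤ a / 4 * ρ ^ 2 := by
      rw [norm_mul, ← hb1]
      exact mul_le_mul hxsmall.le hub (norm_nonneg u) (by positivity)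
    have e2 : ‖(c₁:ℂ) * v‖ ≤ a / 4 * ρ ^ 2 := by
      rw [norm_mul, Complex.norm_real, Real.norm_eq_abs, abs_of_pos hc1pos]
      have h' : c₁ * ‖v‖ ≤ A * ρ * (ε * ρ) :=
        mul_le_mul hc1u hcon.le (norm_nonneg v) (by nlinarith [mul_pos ha hρ])
      have hq : A * ρ * (ε * ρ) = A * ε * ρ ^ 2 := by ring
      linarith [mul_le_mul_of_nonneg_right hAε (sq_nonneg ρ)]
    have e3 : ‖v ^ 2‖ ≤ a / 8 * ρ ^ 2 := by
      rw [norm_pow, pow_two]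
      have h' := mul_self_lt_mul_self (norm_nonneg v) hcon
      have hq : ε * ρ * (ε * ρ) = ε * ε * ρ ^ 2 := by ring
      linarith [mul_le_mul_of_nonneg_right hεsq (sq_nonneg ρ)]
    linarith [mul_pos ha (mul_pos hρ hρ)]
  have hidy : x * z = (c₂ : ℂ) + (c₁ : ℂ) * y + y ^ 2 := by
    linear_combination h2 - y * h1
  have hidz : x * y = (c₂ : ℂ) + (c₁ : ℂ) * z + z ^ 2 := by
    linear_combination h2 - z * h1
  have hybig : ε * ρ ≤ ‖y‖ := hyzbig z y hidy hbz
  have hzbig : ε * ρ ≤ ‖z‖ := hyzbig y z hidz hby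
  -- bound |x| ≤ (2A/a) c₃/c₂
  have hidx : y * z = (c₂ : ℂ) + (c₁ : ℂ) * x + x ^ 2 := by
    linear_combination h2 - x * h1
  have hyzlow : a / 2 * ρ ^ 2 ≤ ‖y * z‖ := by
    have hc2' : (c₂ : ℂ) = y * z - (c₁ : ℂ) * x - x ^ 2 := by linear_combination -hidx
    have hle : c₂ ≤ ‖y * z‖ + ‖(c₁ : ℂ) * x‖
        + ‖x ^ 2‖ := by
      have h0 : c₂ = ‖(c₂ : ℂ)‖ := by
        rw [Complex.norm_real, Real.norm_eq_abs, abs_of_pos hc2pos]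
      rw [h0, hc2']
      calc ‖y * z - (c₁:ℂ) * x - x ^ 2‖
          ≤ ‖y * z - (c₁:ℂ) * x‖ + ‖x ^ 2‖ :=
            norm_sub_le _ _
        _ ≤ _ := by linarith [norm_sub_le (y * z) ((c₁:ℂ) * x)]
    have e2 : ‖(c₁:ℂ) * x‖ ≤ a / 4 * ρ ^ 2 := by
      rw [norm_mul, Complex.norm_real, Real.norm_eq_abs, abs_of_pos hc1pos]
      have h' : c₁ * ‖x‖ ≤ A * ρ * (ε * ρ) :=
        mul_le_mul hc1u hxsmall.le (norm_nonneg x) (by nlinarith [mul_pos ha hρ])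
      have hq : A * ρ * (ε * ρ) = A * ε * ρ ^ 2 := by ring
      linarith [mul_le_mul_of_nonneg_right hAε (sq_nonneg ρ)]
    have e3 : ‖x ^ 2‖ ≤ a / 8 * ρ ^ 2 := by
      rw [norm_pow, pow_two]
      have h' := mul_self_lt_mul_self (norm_nonneg x) hxsmall
      have hq : ε * ρ * (ε * ρ) = ε * ε * ρ ^ 2 := by ring
      linarith [mul_le_mul_of_nonneg_right hεsq (sq_nonneg ρ)]
    linarith [mul_pos ha (mul_pos hρ hρ)]
  have hxbound : ‖x‖ ≤ (2 * A / a) * (c₃ / c₂) := by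
    have hprod : ‖x‖ * ‖y * z‖ = c₃ := by
      rw [← norm_mul, ← mul_assoc, h3, norm_neg, Complex.norm_real, Real.norm_eq_abs,
        abs_of_nonneg hc3l]
    have h1' : ‖x‖ * (a / 2 * ρ ^ 2) ≤ c₃ := by
      calc ‖x‖ * (a / 2 * ρ ^ 2) ≤ ‖x‖ * ‖y * z‖ :=
            mul_le_mul_of_nonneg_left hyzlow (norm_nonneg x)
        _ = c₃ := hprod
    have hrw : (2 * A / a) * (c₃ / c₂) = 2 * A * c₃ / (a * c₂) := by
      field_simp
    rw [hrw, le_div_iff₀ (by positivity)]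
    have hh1 := mul_le_mul_of_nonneg_left hc2u (mul_nonneg ha.le (norm_nonneg x))
    have hh2 := mul_le_mul_of_nonneg_left h1' (by linarith : (0:ℝ) ≤ 2 * A)
    nlinarith [hh1, hh2]
  -- x is real
  have hxim : x.im = 0 := by
    have hc := congrArg (starRingEnd ℂ) hx0
    simp only [map_add, map_mul, map_pow, Complex.conj_ofReal, map_zero] at hc
    have h0 : ((starRingEnd ℂ) x - x) * ((starRingEnd ℂ) x - y)
        * ((starRingEnd ℂ) x - z) = 0 := by
      rw [← hpoly]; exact hc
    have habsconj : ‖(starRingEnd ℂ) x‖ = ‖x‖ :=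
      Complex.norm_conj x
    rcases mul_eq_zero.mp h0 with h | h
    · rcases mul_eq_zero.mp h with h | h
      · exact Complex.conj_eq_iff_im.mp (sub_eq_zero.mp h)
      · exfalso
        have : ‖y‖ = ‖x‖ := by rw [← sub_eq_zero.mp h, habsconj]
        linarith [hxsmall, hybig]
    · exfalso
      have : ‖z‖ = ‖x‖ := by rw [← sub_eq_zero.mp h, habsconj]
      linarith [hxsmall, hzbig]
  exact ⟨hxim, hxbound, hybig, hzbig⟩


/-- (Cubic root dichotomy, slow-root case) Let `p(z) = z³ + c₁z² + c₂z + c₃` be a monic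
real cubic with roots `λ₀, λ₁, λ₂ ∈ ℂ`, and suppose `aρ ≤ c₁ ≤ Aρ`, `aρ² ≤ c₂ ≤ Aρ²`,
`0 ≤ c₃ ≤ δρ³` for a scale `ρ > 0`, constants `0 < a ≤ A`, and `δ` sufficiently small
depending on `a, A`. Then exactly one root is real with modulus at most `C·c₃/c₂`
(for a constant `C` depending only on `a, A`), and the other two roots have modulus
at least `c·ρ` (for a constant `c > 0` depending only on `a, A`). -/
theorem cubic_root_dichotomy (a A : ℝ) (ha : 0 < a) (haA : a ≤ A) :
    ∃ δ C c : ℝ, 0 < δ ∧ 0 < C ∧ 0 < c ∧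
      ∀ (ρ c₁ c₂ c₃ : ℝ) (lam : Fin 3 → ℂ),
        0 < ρ →
        a * ρ ≤ c₁ → c₁ ≤ A * ρ →
        a * ρ ^ 2 ≤ c₂ → c₂ ≤ A * ρ ^ 2 →
        0 ≤ c₃ → c₃ ≤ δ * ρ ^ 3 →
        (∀ z : ℂ, z ^ 3 + (c₁ : ℂ) * z ^ 2 + (c₂ : ℂ) * z + (c₃ : ℂ)
            = (z - lam 0) * (z - lam 1) * (z - lam 2)) →
        ∃ i : Fin 3, (lam i).im = 0 ∧ ‖lam i‖ ≤ C * (c₃ / c₂) ∧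
          ∀ j : Fin 3, j ≠ i → c * ρ ≤ ‖lam j‖ := by
  have hε : 0 < a / (4 * (A + 2)) := div_pos ha (by linarith)
  refine ⟨(a / (4 * (A + 2))) ^ 3 / 2, 2 * A / a, a / (4 * (A + 2)),
    div_pos (pow_pos hε 3) two_pos, div_pos (by linarith) ha, hε, ?_⟩
  intro ρ c₁ c₂ c₃ lam hρ hc1l hc1u hc2l hc2u hc3l hc3u hroot
  -- Vieta
  have h1 : lam 0 + lam 1 + lam 2 = -(c₁ : ℂ) := by
    linear_combination (hroot 1 + hroot (-1)) / 2 - hroot 0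
  have h2 : lam 0 * lam 1 + lam 0 * lam 2 + lam 1 * lam 2 = (c₂ : ℂ) := by
    linear_combination (hroot (-1) - hroot 1) / 2
  have h3 : lam 0 * lam 1 * lam 2 = -(c₃ : ℂ) := by
    linear_combination hroot 0
  rcases le_total (‖lam 0‖) (‖lam 1‖) with h01 | h01
  · rcases le_total (‖lam 0‖) (‖lam 2‖) with h02 | h02
    · -- lam 0 is minimal
      obtain ⟨him, hb, hy, hz⟩ := cubic_aux a A ρ c₁ c₂ c₃ ha haA hρ hc1l hc1u hc2l hc2u
        hc3l hc3u (lam 0) (lam 1) (lam 2) h1 h2 h3 h01 h02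
      refine ⟨0, him, hb, ?_⟩
      intro j hj
      fin_cases j
      · simp at hj
      · exact hy
      · exact hz
    · -- lam 2 is minimal (|λ2| ≤ |λ0| ≤ |λ1|)
      obtain ⟨him, hb, hy, hz⟩ := cubic_aux a A ρ c₁ c₂ c₃ ha haA hρ hc1l hc1u hc2l hc2u
        hc3l hc3u (lam 2) (lam 0) (lam 1)
        (by linear_combination h1) (by linear_combination h2) (by linear_combination h3)
        h02 (h02.trans h01)
      refine ⟨2, him, hb, ?_⟩
      intro j hj
      fin_cases j
      · exact hy
      · exact hz
      · simp at hj
  · rcases le_total (‖lam 1‖) (‖lam 2‖) with h12 | h12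
    · -- lam 1 is minimal
      obtain ⟨him, hb, hy, hz⟩ := cubic_aux a A ρ c₁ c₂ c₃ ha haA hρ hc1l hc1u hc2l hc2u
        hc3l hc3u (lam 1) (lam 0) (lam 2)
        (by linear_combination h1) (by linear_combination h2) (by linear_combination h3)
        h01 h12
      refine ⟨1, him, hb, ?_⟩
      intro j hj
      fin_cases j
      · exact hy
      · simp at hj
      · exact hz
    · -- lam 2 is minimal (|λ2| ≤ |λ1| ≤ |λ0|)
      obtain ⟨him, hb, hy, hz⟩ := cubic_aux a A ρ c₁ c₂ c₃ ha haA hρ hc1l hc1u hc2l hc2u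
        hc3l hc3u (lam 2) (lam 0) (lam 1)
        (by linear_combination h1) (by linear_combination h2) (by linear_combination h3)
        (h12.trans h01) h12
      refine ⟨2, him, hb, ?_⟩
      intro j hj
      fin_cases j
      · exact hy
      · exact hz
      · simp at hj
end
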